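/- Let (M_k,Q_k)_{k≥1} be iid pairs of positive random variables with E[log M] < 0, P(Mr+Q=r) < 1 for all r ≥ 0, and let σ be an integrable stopping time for the sequence. Set X̂_σ = Σ_{k=1}^σ Π_{k-1} Q_k with Π_0 = 1, Π_n = M₁⋯M_n. If lim_{t→∞} t·P(log Q > t) = s ∈ [0,∞], then lim_{t→∞} t·P(log X̂_σ > t) = s·E[σ]. -/

import Mathlib

/-!
Write `G u` for the event that `log Q (k + 1) > u` for some `k < σ`. The event `{k < σ}` is
determined by the first `k` steps, hence independent of `Q (k + 1)`; so `P (G u)` is at most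
`E[σ] P(log Q > u)` by the union bound, and at least this minus `O(P(log Q > u)²)` by
Bonferroni's inequality. Hence `u P(G u) → E[σ] s`.

On the other hand, `log X̂_σ` differs from `max_{k < σ} log Q (k + 1)` by at most
`log σ + ∑_{j ≤ σ} |log M j|`, which has finite mean by Wald's identity and therefore a tail of
order `o(1/t)`. Comparing `{log X̂_σ > t}` with `G ((1 ± ε) t)` and letting `ε → 0` gives the
claim.
-/

open MeasureTheory ProbabilityTheory Filter
open scoped ENNReal

open Finset Topology

namespace ENNReal

theorem tendsto_zero_of_tendsto_ofReal_mul {p : ℝ → ℝ≥0∞} {s : ℝ≥0∞}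
    (hp : Tendsto (fun t => ENNReal.ofReal t * p t) atTop (𝓝 s)) (hs : s ≠ ∞) :
    Tendsto p atTop (𝓝 0) := by
  have hinv : Tendsto (fun t : ℝ => (ENNReal.ofReal t)⁻¹) atTop (𝓝 0) := by
    simpa using tendsto_inv_iff.mpr ENNReal.tendsto_ofReal_atTop
  have := ENNReal.Tendsto.mul hinv (Or.inr hs) hp (Or.inr (by simp))
  rw [zero_mul] at this
  refine this.congr' ?_
  filter_upwards [eventually_gt_atTop 0] with t ht
  rw [← mul_assoc, ENNReal.inv_mul_cancel (ofReal_pos.2 ht).ne' ofReal_ne_top, one_mul]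

theorem tendsto_ofReal_mul_comp_mul {g : ℝ → ℝ≥0∞} {c : ℝ≥0∞}
    (hg : Tendsto (fun t => ENNReal.ofReal t * g t) atTop (𝓝 c)) {a : ℝ} (ha : 0 < a) :
    Tendsto (fun t => ENNReal.ofReal t * g (a * t)) atTop (𝓝 (ENNReal.ofReal a⁻¹ * c)) := by
  refine (ENNReal.Tendsto.const_mul (hg.comp (tendsto_id.const_mul_atTop ha))
    (Or.inr ofReal_ne_top)).congr' ?_
  filter_upwards [eventually_ge_atTop 0] with t ht
  simp only [Function.comp_apply, id, ← mul_assoc, ← ofReal_mul (inv_nonneg.2 ha.le),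
    inv_mul_cancel_left₀ ha.ne']

theorem tendsto_ofReal_inv_mul {φ : ℝ → ℝ} (hφ : Continuous φ) (hφ0 : φ 0 = 1) (c : ℝ≥0∞) :
    Tendsto (fun ε => ENNReal.ofReal (φ ε)⁻¹ * c) (𝓝[>] 0) (𝓝 c) := by
  have h : Tendsto (fun ε => (φ ε)⁻¹) (𝓝 0) (𝓝 1) := by
    simpa [hφ0] using (hφ.tendsto 0).inv₀ (by simp [hφ0])
  simpa using ENNReal.Tendsto.mul_const (ENNReal.tendsto_ofReal (h.mono_left nhdsWithin_le_nhds))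
    (Or.inl (by simp))

theorem tendsto_ofReal_mul_of_dilation_le {f g : ℝ → ℝ≥0∞} {c : ℝ≥0∞}
    (hg : Tendsto (fun t => ENNReal.ofReal t * g t) atTop (𝓝 c))
    (hfg : ∀ ε ∈ Set.Ioo (0 : ℝ) 1, ∃ e : ℝ → ℝ≥0∞,
      Tendsto (fun t => ENNReal.ofReal t * e t) atTop (𝓝 0) ∧
      ∀ᶠ t in atTop, f t ≤ g ((1 - ε) * t) + e t ∧ g ((1 + ε) * t) ≤ f t + e t) :
    Tendsto (fun t => ENNReal.ofReal t * f t) atTop (𝓝 c) := by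
  have hε : ∀ᶠ ε in 𝓝[>] (0 : ℝ), ε ∈ Set.Ioo (0 : ℝ) 1 := Ioo_mem_nhdsGT one_pos
  refine tendsto_of_le_liminf_of_limsup_le ?_ ?_
  · refine le_of_tendsto (tendsto_ofReal_inv_mul (continuous_const_add 1) (add_zero 1) c) ?_
    filter_upwards [hε] with ε hε
    obtain ⟨e, he, hfge⟩ := hfg ε hε
    calc ENNReal.ofReal (1 + ε)⁻¹ * c
        = liminf (fun t => ENNReal.ofReal t * g ((1 + ε) * t)) atTop :=
          (tendsto_ofReal_mul_comp_mul hg (by linarith [hε.1])).liminf_eq.symm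
      _ ≤ liminf ((fun t => ENNReal.ofReal t * f t) + fun t => ENNReal.ofReal t * e t) atTop :=
          liminf_le_liminf (hfge.mono fun t ht => by
            simpa only [Pi.add_apply, ← mul_add] using mul_le_mul_right ht.2 _)
      _ = liminf (fun t => ENNReal.ofReal t * f t) atTop :=
          ENNReal.liminf_add_of_right_tendsto_zero he _
  · refine ge_of_tendsto (tendsto_ofReal_inv_mul (_root_.continuous_sub_left 1) (sub_zero 1) c) ?_
    filter_upwards [hε] with ε hε
    obtain ⟨e, he, hfge⟩ := hfg ε hε
    calc limsup (fun t => ENNReal.ofReal t * f t) atTop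
        ≤ limsup ((fun t => ENNReal.ofReal t * g ((1 - ε) * t))
            + fun t => ENNReal.ofReal t * e t) atTop :=
          limsup_le_limsup (hfge.mono fun t ht => by
            simpa only [Pi.add_apply, ← mul_add] using mul_le_mul_right ht.1 _)
      _ = limsup (fun t => ENNReal.ofReal t * g ((1 - ε) * t)) atTop :=
          ENNReal.limsup_add_of_right_tendsto_zero he _
      _ = ENNReal.ofReal (1 - ε)⁻¹ * c :=
          (tendsto_ofReal_mul_comp_mul hg (by linarith [hε.2])).limsup_eq

end ENNReal

namespace MeasureTheory

variable {Ω : Type*} {mΩ : MeasurableSpace Ω} {μ : Measure Ω}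

theorem tendsto_ofReal_mul_measure_lt {h : Ω → ℝ≥0∞} (hm : Measurable h)
    (hint : ∫⁻ ω, h ω ∂μ ≠ ∞) :
    Tendsto (fun t => ENNReal.ofReal t * μ {ω | ENNReal.ofReal t < h ω}) atTop (𝓝 0) := by
  have hset : ∀ t : ℝ, MeasurableSet {ω | ENNReal.ofReal t < h ω} :=
    fun t => measurableSet_lt measurable_const hm
  have hlim : ∀ᵐ ω ∂μ, Tendsto (fun t : ℝ => {ω | ENNReal.ofReal t < h ω}.indicator h ω)
      atTop (𝓝 0) := by
    filter_upwards [ae_lt_top hm hint] with ω hω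
    refine tendsto_const_nhds.congr' ?_
    filter_upwards [ENNReal.tendsto_ofReal_atTop.eventually_const_lt hω] with t ht
    exact (Set.indicator_of_notMem (s := {ω | ENNReal.ofReal t < h ω}) (not_lt.2 ht.le) h).symm
  have hdom : Tendsto (fun t : ℝ => ∫⁻ ω, {ω | ENNReal.ofReal t < h ω}.indicator h ω ∂μ)
      atTop (𝓝 0) := by
    simpa using tendsto_lintegral_filter_of_dominated_convergence (l := atTop) (f := 0) h
      (.of_forall fun t => hm.indicator (hset t))
      (.of_forall fun t => .of_forall fun ω => Set.indicator_le_self _ _ ω) hint hlim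
  refine tendsto_of_tendsto_of_tendsto_of_le_of_le tendsto_const_nhds hdom (fun _ => zero_le)
    fun t => ?_
  rw [← lintegral_indicator_const (hset t)]
  exact lintegral_mono fun ω => Set.indicator_le_indicator' fun hω => le_of_lt hω

theorem tendsto_ofReal_mul_measure_lt_top_of_le {f g : Ω → ℝ} (hfg : ∀ ω, f ω ≤ g ω)
    (hf : Tendsto (fun t => ENNReal.ofReal t * μ {ω | t < f ω}) atTop (𝓝 ∞)) :
    Tendsto (fun t => ENNReal.ofReal t * μ {ω | t < g ω}) atTop (𝓝 ∞) :=
  tendsto_nhds_top_mono hf (.of_forall fun _ =>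
    mul_le_mul_right (measure_mono fun ω hω => lt_of_lt_of_le hω (hfg ω)) _)

theorem sum_range_measure_le_measure_biUnion_add {A : ℕ → Set Ω}
    (hA : ∀ k, MeasurableSet (A k)) (n : ℕ) :
    ∑ k ∈ range n, μ (A k) ≤
      μ (⋃ k ∈ range n, A k) + ∑ l ∈ range n, ∑ k ∈ range l, μ (A k ∩ A l) := by
  induction n with
  | zero => simp
  | succ n ih =>
    have hinter : μ ((⋃ k ∈ range n, A k) ∩ A n) ≤ ∑ k ∈ range n, μ (A k ∩ A n) := by
      rw [Set.iUnion₂_inter]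
      exact measure_biUnion_finset_le _ _
    have hunion : μ (⋃ k ∈ range n, A k) + μ (A n) ≤
        μ (⋃ k ∈ range (n + 1), A k) + ∑ k ∈ range n, μ (A k ∩ A n) := by
      rw [← measure_union_add_inter _ (hA n), range_add_one, set_biUnion_insert, Set.union_comm]
      exact add_le_add le_rfl hinter
    calc ∑ k ∈ range (n + 1), μ (A k)
        ≤ μ (⋃ k ∈ range n, A k) + μ (A n)
            + ∑ l ∈ range n, ∑ k ∈ range l, μ (A k ∩ A l) := by
          rw [sum_range_succ, add_right_comm]
          exact add_le_add ih le_rfl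
      _ ≤ _ := by
          rw [sum_range_succ _ n, add_comm (∑ l ∈ range n, ∑ k ∈ range l, μ (A k ∩ A l)),
            ← add_assoc]
          exact add_le_add hunion le_rfl

section UnionTail

variable {A : ℕ → Set Ω} {B : ℕ → ℝ → Set Ω} {p : ℝ → ℝ≥0∞}

theorem sum_range_measure_mul_le_measure_iUnion_inter_add
    (hA : ∀ k, MeasurableSet (A k)) (hB : ∀ k u, MeasurableSet (B k u))
    (hAB : ∀ k u, μ (A k ∩ B k u) = μ (A k) * p u)
    (hBB : ∀ k l u, k ≠ l → μ (B k u ∩ B l u) ≤ p u * p u) (n : ℕ) (u : ℝ) :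
    (∑ k ∈ range n, μ (A k)) * p u ≤ μ (⋃ k, A k ∩ B k u) + n * n * (p u * p u) := by
  have hpair : ∀ l ∈ range n, ∑ k ∈ range l, μ (A k ∩ B k u ∩ (A l ∩ B l u)) ≤
      n * (p u * p u) := by
    intro l hl
    calc ∑ k ∈ range l, μ (A k ∩ B k u ∩ (A l ∩ B l u))
        ≤ ∑ k ∈ range l, p u * p u := sum_le_sum fun k hk =>
          (measure_mono (Set.inter_subset_inter Set.inter_subset_right
            Set.inter_subset_right)).trans (hBB k l u (mem_range.1 hk).ne)
      _ ≤ n * (p u * p u) := by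
          rw [sum_const, card_range, nsmul_eq_mul]
          gcongr
          exact_mod_cast (mem_range.1 hl).le
  calc (∑ k ∈ range n, μ (A k)) * p u = ∑ k ∈ range n, μ (A k ∩ B k u) := by
        simp only [sum_mul, hAB]
    _ ≤ μ (⋃ k ∈ range n, A k ∩ B k u)
          + ∑ l ∈ range n, ∑ k ∈ range l, μ (A k ∩ B k u ∩ (A l ∩ B l u)) :=
        sum_range_measure_le_measure_biUnion_add (fun k => (hA k).inter (hB k u)) n
    _ ≤ μ (⋃ k, A k ∩ B k u) + ∑ l ∈ range n, n * (p u * p u) := by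
        gcongr ?_ + ?_
        · exact measure_mono (Set.iUnion₂_subset_iUnion _ _)
        · exact sum_le_sum hpair
    _ = μ (⋃ k, A k ∩ B k u) + n * n * (p u * p u) := by
        rw [sum_const, card_range, nsmul_eq_mul, mul_assoc]

theorem tendsto_ofReal_mul_measure_iUnion_inter
    (hA : ∀ k, MeasurableSet (A k)) (hB : ∀ k u, MeasurableSet (B k u))
    (hAB : ∀ k u, μ (A k ∩ B k u) = μ (A k) * p u)
    (hBB : ∀ k l u, k ≠ l → μ (B k u ∩ B l u) ≤ p u * p u)
    (hA_sum : ∑' k, μ (A k) ≠ ∞) {s : ℝ≥0∞}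
    (hp : Tendsto (fun u => ENNReal.ofReal u * p u) atTop (𝓝 s)) (hs : s ≠ ∞) :
    Tendsto (fun u => ENNReal.ofReal u * μ (⋃ k, A k ∩ B k u)) atTop
      (𝓝 ((∑' k, μ (A k)) * s)) := by
  refine tendsto_of_le_liminf_of_limsup_le ?_ ?_
  · -- Bonferroni on the first `n` events; the pairwise error `n² p u²` is `o(1/u)`.
    have hp0 := ENNReal.tendsto_zero_of_tendsto_ofReal_mul hp hs
    refine le_of_tendsto (ENNReal.Tendsto.mul_const (ENNReal.tendsto_nat_tsum _) (Or.inr hs))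
      (Eventually.of_forall fun n => ?_)
    have herr : Tendsto (fun u => (n * n : ℝ≥0∞) * (ENNReal.ofReal u * p u * p u)) atTop
        (𝓝 0) := by
      have := ENNReal.Tendsto.mul hp (Or.inr (by simp)) hp0 (Or.inr hs)
      simpa using ENNReal.Tendsto.const_mul this (Or.inr (by finiteness))
    calc (∑ k ∈ range n, μ (A k)) * s
        = liminf (fun u => (∑ k ∈ range n, μ (A k)) * (ENNReal.ofReal u * p u)) atTop :=
          (ENNReal.Tendsto.const_mul hp
            (Or.inr (ne_top_of_le_ne_top hA_sum (ENNReal.sum_le_tsum _)))).liminf_eq.symm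
      _ ≤ liminf ((fun u => ENNReal.ofReal u * μ (⋃ k, A k ∩ B k u))
            + fun u => (n * n : ℝ≥0∞) * (ENNReal.ofReal u * p u * p u)) atTop := by
          refine liminf_le_liminf (Eventually.of_forall fun u => ?_)
          calc (∑ k ∈ range n, μ (A k)) * (ENNReal.ofReal u * p u)
              = ENNReal.ofReal u * ((∑ k ∈ range n, μ (A k)) * p u) := by ring
            _ ≤ ENNReal.ofReal u * (μ (⋃ k, A k ∩ B k u) + n * n * (p u * p u)) := by
                gcongr
                exact sum_range_measure_mul_le_measure_iUnion_inter_add hA hB hAB hBB n u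
            _ = _ := by simp only [Pi.add_apply]; ring
      _ = _ := ENNReal.liminf_add_of_right_tendsto_zero herr _
  · calc limsup (fun u => ENNReal.ofReal u * μ (⋃ k, A k ∩ B k u)) atTop
        ≤ limsup (fun u => (∑' k, μ (A k)) * (ENNReal.ofReal u * p u)) atTop := by
          refine limsup_le_limsup (Eventually.of_forall fun u => ?_)
          calc ENNReal.ofReal u * μ (⋃ k, A k ∩ B k u)
              ≤ ENNReal.ofReal u * ∑' k, μ (A k ∩ B k u) := by gcongr; exact measure_iUnion_le _
            _ = (∑' k, μ (A k)) * (ENNReal.ofReal u * p u) := by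
                simp only [hAB, ENNReal.tsum_mul_right]; ring
      _ = (∑' k, μ (A k)) * s := (ENNReal.Tendsto.const_mul hp (Or.inr hA_sum)).limsup_eq

end UnionTail

theorem sum_range_eq_tsum_indicator (σ : Ω → ℕ) (f : ℕ → Ω → ℝ≥0∞) (ω : Ω) :
    ∑ k ∈ range (σ ω), f k ω = ∑' k, {ω | k < σ ω}.indicator (f k) ω := by
  rw [tsum_eq_sum (s := range (σ ω)) fun k hk => Set.indicator_of_notMem (by simpa using hk) _]
  exact sum_congr rfl fun k hk =>
    (Set.indicator_of_mem (s := {ω | k < σ ω}) (mem_range.1 hk) (f k)).symm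

theorem measurable_sum_range {σ : Ω → ℕ} (hσ : ∀ k, MeasurableSet {ω | k < σ ω})
    {f : ℕ → Ω → ℝ≥0∞} (hf : ∀ k, Measurable (f k)) :
    Measurable fun ω => ∑ k ∈ range (σ ω), f k ω := by
  simp_rw [sum_range_eq_tsum_indicator]
  exact Measurable.tsum fun k => (hf k).indicator (hσ k)

theorem lintegral_sum_range_eq_tsum_setLIntegral {σ : Ω → ℕ}
    (hσ : ∀ k, MeasurableSet {ω | k < σ ω}) {f : ℕ → Ω → ℝ≥0∞}
    (hf : ∀ k, AEMeasurable (f k) μ) :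
    ∫⁻ ω, ∑ k ∈ range (σ ω), f k ω ∂μ = ∑' k, ∫⁻ ω in {ω | k < σ ω}, f k ω ∂μ := by
  simp_rw [sum_range_eq_tsum_indicator, ← lintegral_indicator (hσ _)]
  exact lintegral_tsum fun k => (hf k).indicator (hσ k)

theorem lintegral_natCast_eq_tsum_measure_lt {σ : Ω → ℕ}
    (hσ : ∀ k, MeasurableSet {ω | k < σ ω}) :
    ∫⁻ ω, (σ ω : ℝ≥0∞) ∂μ = ∑' k, μ {ω | k < σ ω} := by
  simpa using lintegral_sum_range_eq_tsum_setLIntegral (μ := μ) (f := fun _ _ => 1) hσ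
    fun _ => aemeasurable_const

theorem ofReal_integral_natCast_eq_tsum_measure_lt {σ : Ω → ℕ}
    (hσ : ∀ k, MeasurableSet {ω | k < σ ω}) (hint : Integrable (fun ω => (σ ω : ℝ)) μ) :
    ENNReal.ofReal (∫ ω, (σ ω : ℝ) ∂μ) = ∑' k, μ {ω | k < σ ω} := by
  rw [ofReal_integral_eq_lintegral_ofReal hint (.of_forall fun ω => Nat.cast_nonneg _),
    ← lintegral_natCast_eq_tsum_measure_lt hσ]
  simp

theorem IsStoppingTime.measurableSet_lt_natCast {ℱ : Filtration ℕ mΩ} {σ : Ω → ℕ}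
    (hσ : IsStoppingTime ℱ fun ω => (σ ω : WithTop ℕ)) (k : ℕ) :
    MeasurableSet[ℱ k] {ω | k < σ ω} := by
  simpa using hσ.measurableSet_gt k

section IID

variable {β : Type*} [TopologicalSpace β] [TopologicalSpace.MetrizableSpace β]
  [mβ : MeasurableSpace β] [BorelSpace β] {X : ℕ → Ω → β} {hX : ∀ n, StronglyMeasurable (X n)}
  {σ : Ω → ℕ}

theorem _root_.ProbabilityTheory.iIndepFun.indep_natural_comap_succ (hind : iIndepFun X μ)
    (k : ℕ) : Indep (Filtration.natural X hX k) (mβ.comap (X (k + 1))) μ := by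
  have hle : ∀ n, mβ.comap (X n) ≤ mΩ := fun n => (hX n).measurable.comap_le
  refine indep_of_indep_of_le_left (indep_of_indep_of_le_right
    (indep_biSup_compl hle hind.iIndep (Set.Iic k)) ?_) le_rfl
  exact le_biSup (fun n => mβ.comap (X n)) (by simp : k + 1 ∈ (Set.Iic k)ᶜ)

/-- Wald's identity. -/
theorem lintegral_sum_range_comp_succ [IsProbabilityMeasure μ] (hind : iIndepFun X μ)
    (hident : ∀ n, IdentDistrib (X n) (X 1) μ μ)
    (hσ : IsStoppingTime (Filtration.natural X hX) fun ω => (σ ω : WithTop ℕ))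
    {φ : β → ℝ≥0∞} (hφ : Measurable φ) :
    ∫⁻ ω, ∑ k ∈ range (σ ω), φ (X (k + 1) ω) ∂μ =
      (∑' k, μ {ω | k < σ ω}) * ∫⁻ ω, φ (X 1 ω) ∂μ := by
  have hA k : MeasurableSet {ω | k < σ ω} :=
    (Filtration.natural X hX).le k _ (hσ.measurableSet_lt_natCast k)
  rw [lintegral_sum_range_eq_tsum_setLIntegral (f := fun k ω => φ (X (k + 1) ω)) hA
    fun k => (hφ.comp (hX (k + 1)).measurable).aemeasurable, ← ENNReal.tsum_mul_right]
  refine tsum_congr fun k => ?_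
  have hφX : Measurable[mβ.comap (X (k + 1))] fun ω => φ (X (k + 1) ω) :=
    hφ.comp (comap_measurable _)
  have hAk : Measurable[Filtration.natural X hX k]
      ({ω | k < σ ω}.indicator fun _ => (1 : ℝ≥0∞)) :=
    measurable_const.indicator (hσ.measurableSet_lt_natCast k)
  calc ∫⁻ ω in {ω | k < σ ω}, φ (X (k + 1) ω) ∂μ
      = ∫⁻ ω, {ω | k < σ ω}.indicator (fun _ => 1) ω * φ (X (k + 1) ω) ∂μ := by
        rw [← lintegral_indicator (hA k)]
        congr with ω
        by_cases hω : ω ∈ {ω | k < σ ω} <;> simp [hω]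
    _ = μ {ω | k < σ ω} * ∫⁻ ω, φ (X 1 ω) ∂μ := by
        rw [lintegral_mul_eq_lintegral_mul_lintegral_of_independent_measurableSpace
          ((Filtration.natural X hX).le k) ((hX (k + 1)).measurable.comap_le)
          (hind.indep_natural_comap_succ k)
          hAk hφX, lintegral_indicator_const (hA k), one_mul]
        exact congrArg _ ((hident (k + 1)).comp hφ).lintegral_eq

theorem tendsto_ofReal_mul_measure_lt_sum_range_comp_succ [IsProbabilityMeasure μ]
    (hind : iIndepFun X μ) (hident : ∀ n, IdentDistrib (X n) (X 1) μ μ)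
    (hσ : IsStoppingTime (Filtration.natural X hX) fun ω => (σ ω : WithTop ℕ))
    (hσ_sum : ∑' k, μ {ω | k < σ ω} ≠ ∞) {φ : β → ℝ≥0∞} (hφ : Measurable φ)
    (hφ_int : ∫⁻ ω, φ (X 1 ω) ∂μ ≠ ∞) {ε : ℝ} (hε : 0 < ε) :
    Tendsto (fun t => ENNReal.ofReal t *
      μ {ω | ENNReal.ofReal (ε * t) < ∑ k ∈ range (σ ω), φ (X (k + 1) ω)}) atTop (𝓝 0) := by
  have hmeas : Measurable fun ω => ∑ k ∈ range (σ ω), φ (X (k + 1) ω) :=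
    measurable_sum_range (fun k => (Filtration.natural X hX).le k _ (hσ.measurableSet_lt_natCast k))
      fun k => hφ.comp (hX (k + 1)).measurable
  have hint : ∫⁻ ω, ∑ k ∈ range (σ ω), φ (X (k + 1) ω) ∂μ ≠ ∞ := by
    rw [lintegral_sum_range_comp_succ hind hident hσ hφ]
    exact ENNReal.mul_ne_top hσ_sum hφ_int
  simpa using ENNReal.tendsto_ofReal_mul_comp_mul
    (tendsto_ofReal_mul_measure_lt hmeas hint) hε

theorem tendsto_ofReal_mul_measure_iUnion_lt_inter_preimage [IsProbabilityMeasure μ]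
    (hind : iIndepFun X μ) (hident : ∀ n, IdentDistrib (X n) (X 1) μ μ)
    (hσ : IsStoppingTime (Filtration.natural X hX) fun ω => (σ ω : WithTop ℕ))
    (hσ_sum : ∑' k, μ {ω | k < σ ω} ≠ ∞) {S : ℝ → Set β} (hS : ∀ u, MeasurableSet (S u))
    {s : ℝ≥0∞} (htail : Tendsto (fun u => ENNReal.ofReal u * μ (X 1 ⁻¹' S u)) atTop (𝓝 s))
    (hs : s ≠ ∞) :
    Tendsto (fun u => ENNReal.ofReal u * μ (⋃ k, {ω | k < σ ω} ∩ X (k + 1) ⁻¹' S u)) atTop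
      (𝓝 ((∑' k, μ {ω | k < σ ω}) * s)) := by
  refine tendsto_ofReal_mul_measure_iUnion_inter
    (fun k => (Filtration.natural X hX).le k _ (hσ.measurableSet_lt_natCast k))
    (fun k u => (hX (k + 1)).measurable (hS u)) (fun k u => ?_) (fun k l u hkl => ?_) hσ_sum
    htail hs
  · rw [(Indep_iff _ _ _).1 (hind.indep_natural_comap_succ k) _ _
      (hσ.measurableSet_lt_natCast k) ⟨S u, hS u, rfl⟩, (hident (k + 1)).measure_mem_eq (hS u)]
  · rw [(hind.indepFun (by omega : k + 1 ≠ l + 1)).measure_inter_preimage_eq_mul _ _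
      (hS u) (hS u),
      (hident (k + 1)).measure_mem_eq (hS u), (hident (l + 1)).measure_mem_eq (hS u)]

end IID

end MeasureTheory

theorem Finset.prod_Icc_one_eq_prod_range {M : Type*} [CommMonoid M] (f : ℕ → M) (n : ℕ) :
    ∏ j ∈ Icc 1 n, f j = ∏ j ∈ range n, f (j + 1) := by
  rw [← Ico_add_one_right_eq_Icc, prod_Ico_eq_prod_range]
  simp [add_comm]

noncomputable def perpetuity (a b : ℕ → ℝ) (n : ℕ) : ℝ :=
  ∑ k ∈ range n, (∏ j ∈ range k, a j) * b k

theorem sum_Icc_prod_Icc_eq_perpetuity (m q : ℕ → ℝ) (n : ℕ) :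
    ∑ k ∈ Icc 1 n, (∏ j ∈ Icc 1 (k - 1), m j) * q k =
      perpetuity (fun j => m (j + 1)) (fun k => q (k + 1)) n := by
  rw [← Ico_add_one_right_eq_Icc, sum_Ico_eq_sum_range]
  simp [add_comm, prod_Icc_one_eq_prod_range, perpetuity]

section Perpetuity

variable {a b : ℕ → ℝ}

theorem abs_log_prod_range_le (ha : ∀ j, 0 < a j) {k n : ℕ} (hkn : k ≤ n) :
    |Real.log (∏ j ∈ range k, a j)| ≤ ∑ j ∈ range n, |Real.log (a j)| := by
  rw [Real.log_prod fun j _ => (ha j).ne']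
  exact (abs_sum_le_sum_abs _ _).trans
    (sum_le_sum_of_subset_of_nonneg (range_subset_range.2 hkn) fun _ _ _ => abs_nonneg _)

theorem le_perpetuity (ha : ∀ j, 0 < a j) (hb : ∀ k, 0 < b k) {n : ℕ} (hn : 0 < n) :
    b 0 ≤ perpetuity a b n := by
  simpa [perpetuity] using single_le_sum (f := fun k => (∏ j ∈ range k, a j) * b k)
    (fun i _ => (mul_pos (prod_pos fun j _ => ha j) (hb i)).le) (mem_range.2 hn)

theorem log_le_log_perpetuity_add (ha : ∀ j, 0 < a j) (hb : ∀ k, 0 < b k) {k n : ℕ}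
    (hk : k < n) :
    Real.log (b k) ≤ Real.log (perpetuity a b n) + ∑ j ∈ range n, |Real.log (a j)| := by
  have hprod : 0 < ∏ j ∈ range k, a j := prod_pos fun j _ => ha j
  have hterm : (∏ j ∈ range k, a j) * b k ≤ perpetuity a b n :=
    single_le_sum (f := fun k => (∏ j ∈ range k, a j) * b k)
      (fun i _ => (mul_pos (prod_pos fun j _ => ha j) (hb i)).le) (mem_range.2 hk)
  have hlog := Real.log_le_log (mul_pos hprod (hb k)) hterm
  rw [Real.log_mul hprod.ne' (hb k).ne'] at hlog
  linarith [neg_abs_le (Real.log (∏ j ∈ range k, a j)), abs_log_prod_range_le ha hk.le]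

theorem exists_log_perpetuity_le (ha : ∀ j, 0 < a j) (hb : ∀ k, 0 < b k) {n : ℕ}
    (hn : 0 < n) : ∃ k < n,
      Real.log (perpetuity a b n) ≤ Real.log (b k) + ∑ j ∈ range n, (1 + |Real.log (a j)|) := by
  set R := ∑ j ∈ range n, |Real.log (a j)|
  obtain ⟨k, hk, hmax⟩ := exists_max_image (range n) b (nonempty_range_iff.2 hn.ne')
  refine ⟨k, mem_range.1 hk, ?_⟩
  have hprod : ∀ i ∈ range n, ∏ j ∈ range i, a j ≤ Real.exp R := fun i hi => by
    rw [← Real.exp_log (prod_pos fun j _ => ha j)]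
    exact Real.exp_le_exp.2
      ((le_abs_self _).trans (abs_log_prod_range_le ha (mem_range.1 hi).le))
  have hle : perpetuity a b n ≤ n * (Real.exp R * b k) := by
    calc perpetuity a b n ≤ ∑ _i ∈ range n, Real.exp R * b k :=
          sum_le_sum fun i hi =>
            mul_le_mul (hprod i hi) (hmax i hi) (hb i).le (Real.exp_nonneg _)
      _ = n * (Real.exp R * b k) := by rw [sum_const, card_range, nsmul_eq_mul]
  have hpos : 0 < perpetuity a b n :=
    sum_pos (fun i _ => mul_pos (prod_pos fun j _ => ha j) (hb i)) (nonempty_range_iff.2 hn.ne')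
  have hn' : (0 : ℝ) < n := by exact_mod_cast hn
  -- the summands `1` pay for the factor `n`, via `log n ≤ n`
  calc Real.log (perpetuity a b n)
      ≤ Real.log (n * (Real.exp R * b k)) := Real.log_le_log hpos hle
    _ = Real.log n + R + Real.log (b k) := by
        rw [Real.log_mul hn'.ne' (mul_pos (Real.exp_pos R) (hb k)).ne',
          Real.log_mul (Real.exp_pos R).ne' (hb k).ne', Real.log_exp]
        ring
    _ ≤ n + R + Real.log (b k) := by linarith [Real.log_le_self hn'.le]
    _ = Real.log (b k) + ∑ j ∈ range n, (1 + |Real.log (a j)|) := by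
        rw [sum_add_distrib, sum_const, card_range, nsmul_eq_mul, mul_one]; ring

end Perpetuity

section Inclusions

variable {Ω : Type*} {a b : Ω → ℕ → ℝ} {σ : Ω → ℕ} {ε t : ℝ}

theorem setOf_lt_log_perpetuity_subset (ha : ∀ ω j, 0 < a ω j) (hb : ∀ ω k, 0 < b ω k)
    (hσ : ∀ ω, 0 < σ ω) (hεt : 0 ≤ ε * t) :
    {ω | t < Real.log (perpetuity (a ω) (b ω) (σ ω))} ⊆
      (⋃ k, {ω | k < σ ω} ∩ {ω | (1 - ε) * t < Real.log (b ω k)}) ∪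
        {ω | ENNReal.ofReal (ε * t) <
          ∑ j ∈ range (σ ω), ENNReal.ofReal (1 + |Real.log (a ω j)|)} := by
  intro ω hω
  rcases le_or_gt (∑ j ∈ range (σ ω), ENNReal.ofReal (1 + |Real.log (a ω j)|))
    (ENNReal.ofReal (ε * t)) with hW | hW
  · rw [← ENNReal.ofReal_sum_of_nonneg fun _ _ => by positivity,
      ENNReal.ofReal_le_ofReal_iff hεt] at hW
    obtain ⟨k, hk, hlog⟩ := exists_log_perpetuity_le (ha ω) (hb ω) (hσ ω)
    refine Or.inl (Set.mem_iUnion.2 ⟨k, hk, ?_⟩)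
    simp only [Set.mem_ofPred_eq] at hω ⊢
    linarith
  · exact Or.inr hW

theorem iUnion_inter_lt_log_subset (ha : ∀ ω j, 0 < a ω j) (hb : ∀ ω k, 0 < b ω k)
    (hεt : 0 ≤ ε * t) :
    (⋃ k, {ω | k < σ ω} ∩ {ω | (1 + ε) * t < Real.log (b ω k)}) ⊆
      {ω | t < Real.log (perpetuity (a ω) (b ω) (σ ω))} ∪
        {ω | ENNReal.ofReal (ε * t) <
          ∑ j ∈ range (σ ω), ENNReal.ofReal (1 + |Real.log (a ω j)|)} := by
  intro ω hω
  obtain ⟨k, hk, hlog⟩ := Set.mem_iUnion.1 hω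
  rcases le_or_gt (∑ j ∈ range (σ ω), ENNReal.ofReal (1 + |Real.log (a ω j)|))
    (ENNReal.ofReal (ε * t)) with hW | hW
  · rw [← ENNReal.ofReal_sum_of_nonneg fun _ _ => by positivity,
      ENNReal.ofReal_le_ofReal_iff hεt] at hW
    have hR : ∑ j ∈ range (σ ω), |Real.log (a ω j)| ≤
        ∑ j ∈ range (σ ω), (1 + |Real.log (a ω j)|) := sum_le_sum fun _ _ => by linarith
    have := log_le_log_perpetuity_add (ha ω) (hb ω) hk
    simp only [Set.mem_ofPred_eq] at hlog
    exact Or.inl (show t < _ by linarith)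
  · exact Or.inr hW

end Inclusions

theorem stmt_11_general {Ω : Type*} [MeasureSpace Ω] [IsProbabilityMeasure (ℙ : Measure Ω)]
    (M Q : ℕ → Ω → ℝ) (hsm : ∀ n, StronglyMeasurable (fun ω => (M n ω, Q n ω)))
    (hindep : iIndepFun (fun n ω => (M n ω, Q n ω)) ℙ)
    (hident : ∀ n, IdentDistrib (fun ω => (M n ω, Q n ω)) (fun ω => (M 1 ω, Q 1 ω)) ℙ ℙ)
    (hMpos : ∀ n ω, 0 < M n ω) (hQpos : ∀ n ω, 0 < Q n ω)
    (hlogMint : Integrable (fun ω => Real.log (M 1 ω)))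
    (σ : Ω → ℕ) (hσ : IsStoppingTime (Filtration.natural (fun n ω => (M n ω, Q n ω)) hsm) (fun ω => (σ ω : WithTop ℕ)))
    (hσ1 : ∀ ω, 1 ≤ σ ω) (hσint : Integrable (fun ω => (σ ω : ℝ)))
    (Xhat : Ω → ℝ)
    (hXhat : ∀ ω, Xhat ω = ∑ k ∈ Finset.Icc 1 (σ ω), (∏ j ∈ Finset.Icc 1 (k - 1), M j ω) * Q k ω)
    (s : ℝ≥0∞)
    (htail : Tendsto (fun t : ℝ => ENNReal.ofReal t * ℙ {ω | t < Real.log (Q 1 ω)})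
      atTop (nhds s)) :
    Tendsto (fun t : ℝ => ENNReal.ofReal t * ℙ {ω | t < Real.log (Xhat ω)})
      atTop (nhds (s * ENNReal.ofReal (∫ ω, (σ ω : ℝ)))) := by
  have hA k : MeasurableSet {ω | k < σ ω} :=
    (Filtration.natural _ hsm).le k _ (hσ.measurableSet_lt_natCast k)
  have hL := ofReal_integral_natCast_eq_tsum_measure_lt hA hσint
  have hL_ne_top : ∑' k, ℙ {ω | k < σ ω} ≠ ∞ := hL ▸ ENNReal.ofReal_ne_top
  obtain rfl : Xhat = fun ω => perpetuity (fun j => M (j + 1) ω) (fun k => Q (k + 1) ω) (σ ω) :=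
    funext fun ω => (hXhat ω).trans (sum_Icc_prod_Icc_eq_perpetuity _ _ _)
  rcases eq_or_ne s ∞ with rfl | hs
  · have hσ_ge : (1 : ℝ) ≤ ∫ ω, (σ ω : ℝ) := by
      simpa using integral_mono (integrable_const 1) hσint fun ω => Nat.one_le_cast.2 (hσ1 ω)
    rw [ENNReal.top_mul (ENNReal.ofReal_pos.2 (one_pos.trans_le hσ_ge)).ne']
    exact tendsto_ofReal_mul_measure_lt_top_of_le (fun ω => Real.log_le_log (hQpos 1 ω)
      (le_perpetuity (fun j => hMpos (j + 1) ω) (fun k => hQpos (k + 1) ω) (hσ1 ω))) htail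
  have hφ : Measurable fun x : ℝ × ℝ => ENNReal.ofReal (1 + |Real.log x.1|) := by fun_prop
  rw [hL, mul_comm]
  refine ENNReal.tendsto_ofReal_mul_of_dilation_le
    (tendsto_ofReal_mul_measure_iUnion_lt_inter_preimage hindep hident hσ hL_ne_top
      (S := fun u => {x | u < Real.log x.2})
      (fun u => measurableSet_lt measurable_const (by fun_prop)) htail hs) fun ε hε =>
    ⟨_, tendsto_ofReal_mul_measure_lt_sum_range_comp_succ hindep hident hσ hL_ne_top hφ
      ((integrable_const 1).add hlogMint.abs).lintegral_lt_top.ne hε.1, ?_⟩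
  filter_upwards [eventually_ge_atTop 0] with t ht
  have hεt : 0 ≤ ε * t := mul_nonneg hε.1.le ht
  exact ⟨(measure_mono (setOf_lt_log_perpetuity_subset (fun ω j => hMpos (j + 1) ω)
      (fun ω k => hQpos (k + 1) ω) hσ1 hεt)).trans (measure_union_le _ _),
    (measure_mono (iUnion_inter_lt_log_subset (fun ω j => hMpos (j + 1) ω)
      (fun ω k => hQpos (k + 1) ω) hεt)).trans (measure_union_le _ _)⟩

theorem stmt_11 {Ω : Type*} [MeasureSpace Ω] [IsProbabilityMeasure (ℙ : Measure Ω)]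
    (M Q : ℕ → Ω → ℝ) (hsm : ∀ n, StronglyMeasurable (fun ω => (M n ω, Q n ω)))
    (hindep : iIndepFun (fun n ω => (M n ω, Q n ω)) ℙ)
    (hident : ∀ n, IdentDistrib (fun ω => (M n ω, Q n ω)) (fun ω => (M 1 ω, Q 1 ω)) ℙ ℙ)
    (hMpos : ∀ n ω, 0 < M n ω) (hQpos : ∀ n ω, 0 < Q n ω)
    (hlogMint : Integrable (fun ω => Real.log (M 1 ω)))
    (hdrift : ∫ ω, Real.log (M 1 ω) < 0)
    (hnondeg : ∀ r : ℝ, 0 ≤ r → ℙ {ω | M 1 ω * r + Q 1 ω = r} < 1)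
    (σ : Ω → ℕ) (hσ : IsStoppingTime (Filtration.natural (fun n ω => (M n ω, Q n ω)) hsm) (fun ω => (σ ω : WithTop ℕ)))
    (hσ1 : ∀ ω, 1 ≤ σ ω) (hσint : Integrable (fun ω => (σ ω : ℝ)))
    (Xhat : Ω → ℝ)
    (hXhat : ∀ ω, Xhat ω = ∑ k ∈ Finset.Icc 1 (σ ω), (∏ j ∈ Finset.Icc 1 (k - 1), M j ω) * Q k ω)
    (s : ℝ≥0∞)
    (htail : Tendsto (fun t : ℝ => ENNReal.ofReal t * ℙ {ω | t < Real.log (Q 1 ω)})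
      atTop (nhds s)) :
    Tendsto (fun t : ℝ => ENNReal.ofReal t * ℙ {ω | t < Real.log (Xhat ω)})
      atTop (nhds (s * ENNReal.ofReal (∫ ω, (σ ω : ℝ)))) :=
  stmt_11_general M Q hsm hindep hident hMpos hQpos hlogMint σ hσ hσ1 hσint Xhat hXhat s htail
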